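/- Testing between converging hypotheses: consider a binary hypothesis test with uniform prior H ∼ Bernoulli(1/2), where given H = 0 the samples X₁ⁿ are i.i.d. P_X and given H = 1 they are i.i.d. Q_X, on a finite alphabet 𝒳. If ‖P_X − Q_X‖₂ ≥ n^{−(1/2 − εₙ)} for some εₙ ∈ (0, 1/2), then the minimum (maximum-likelihood) probability of error satisfies P_ML ≤ |𝒳| / (2|𝒳| + 2n^{2εₙ}). -/

import Mathlib

open Real

/-- `P` is a probability distribution on a finite set. -/
def IsProb {X : Type*} [Fintype X] (P : X → ℝ) : Prop :=
  (∀ x, 0 ≤ P x) ∧ ∑ x, P x = 1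

/-- The n-fold product (i.i.d.) distribution. -/
def prodD {X : Type*} (P : X → ℝ) (n : ℕ) : (Fin n → X) → ℝ :=
  fun xs => ∏ i, P (xs i)

/-! The linear statistic `T(x₁ⁿ) = ∑ᵢ (P - Q)(xᵢ)`, centred at the midpoint `θ` of its means under
the two hypotheses, has correlation `n c` with `P^⊗n - Q^⊗n`, where `c = ‖P - Q‖₂²`. A weighted
Cauchy–Schwarz inequality bounds `(n c)²` by `‖P^⊗n - Q^⊗n‖₁` times the second moment of `T - θ`
under `P^⊗n + Q^⊗n`; by the bias–variance decomposition of an i.i.d. sum that moment is at most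
`(n c / 2)(|𝒳| + n c)`, because `∑ (P - Q) = 0` forces `|𝒳| (P x - Q x)² ≤ (|𝒳| - 1) c`.
Hence `‖P^⊗n - Q^⊗n‖_TV ≥ n c / (|𝒳| + n c)`, and `n c ≥ n^{2ε}` by hypothesis. -/

open Finset

theorem Fin.sum_univ_pi_succ {X M : Type*} [Fintype X] [AddCommMonoid M] {n : ℕ}
    (F : (Fin (n + 1) → X) → M) :
    ∑ xs, F xs = ∑ x, ∑ xs : Fin n → X, F (Fin.cons x xs) := by
  rw [← (Fin.consEquiv fun _ ↦ X).sum_comp F, Fintype.sum_prod_type]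
  rfl

theorem prodD_cons {X : Type*} (P : X → ℝ) {n : ℕ} (x : X) (xs : Fin n → X) :
    prodD P (n + 1) (Fin.cons x xs) = P x * prodD P n xs := by
  simp [prodD, Fin.prod_univ_succ]

theorem prodD_nonneg {X : Type*} {P : X → ℝ} (hP : ∀ x, 0 ≤ P x) {n : ℕ} (xs : Fin n → X) :
    0 ≤ prodD P n xs :=
  prod_nonneg fun i _ ↦ hP (xs i)

section IIDSum

variable {X : Type*} [Fintype X] {P : X → ℝ}

omit [Fintype X] in
theorem prodD_cons_mul_sum_sub (u : X → ℝ) {n : ℕ} (k : ℕ) (a : ℝ) (x : X) (xs : Fin n → X) :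
    prodD P (n + 1) (Fin.cons x xs) * (∑ i, u ((Fin.cons x xs : Fin (n + 1) → X) i) - a) ^ k =
      P x * (prodD P n xs * (∑ i, u (xs i) - (a - u x)) ^ k) := by
  rw [prodD_cons, Fin.sum_univ_succ]
  simp only [Fin.cons_zero, Fin.cons_succ]
  ring

theorem sum_prodD_mul_sum_sub (hP : ∑ x, P x = 1) (u : X → ℝ) (n : ℕ) (a : ℝ) :
    ∑ xs : Fin n → X, prodD P n xs * (∑ i, u (xs i) - a) = n * ∑ x, P x * u x - a := by
  induction n generalizing a with
  | zero => simp [prodD]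
  | succ n ih =>
    have step (x : X) (xs : Fin n → X) := by simpa using prodD_cons_mul_sum_sub (P := P) u 1 a x xs
    simp only [Fin.sum_univ_pi_succ, step, ← mul_sum, ih]
    simp only [mul_sub, sum_sub_distrib, ← sum_mul, hP]
    push_cast
    ring

theorem sum_prodD_mul_sum_sub_sq (hP : ∑ x, P x = 1) (u : X → ℝ) (n : ℕ) (a : ℝ) :
    ∑ xs : Fin n → X, prodD P n xs * (∑ i, u (xs i) - a) ^ 2 =
      n * (∑ x, P x * u x ^ 2 - (∑ x, P x * u x) ^ 2) + (n * ∑ x, P x * u x - a) ^ 2 := by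
  induction n generalizing a with
  | zero => simp [prodD]
  | succ n ih =>
    simp only [Fin.sum_univ_pi_succ, prodD_cons_mul_sum_sub, ← mul_sum, ih]
    have expand (x : X) : P x * (n * (∑ x, P x * u x ^ 2 - (∑ x, P x * u x) ^ 2) +
        (n * ∑ x, P x * u x - (a - u x)) ^ 2) =
        (n * (∑ x, P x * u x ^ 2 - (∑ x, P x * u x) ^ 2) + (n * ∑ x, P x * u x - a) ^ 2) * P x +
          2 * (n * ∑ x, P x * u x - a) * (P x * u x) + P x * u x ^ 2 := by ring
    simp only [expand, sum_add_distrib, ← mul_sum, hP]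
    push_cast
    ring

end IIDSum

theorem sq_sum_sub_mul_le_sum_abs_sub_mul_sum_add_mul_sq {ι : Type*} (s : Finset ι) {A B : ι → ℝ}
    (hA : ∀ i ∈ s, 0 ≤ A i) (hB : ∀ i ∈ s, 0 ≤ B i) (f : ι → ℝ) :
    (∑ i ∈ s, (A i - B i) * f i) ^ 2 ≤
      (∑ i ∈ s, |A i - B i|) * ∑ i ∈ s, (A i + B i) * f i ^ 2 := by
  refine sum_sq_le_sum_mul_sum_of_sq_le_mul s (fun i _ ↦ abs_nonneg _)
    (fun i hi ↦ mul_nonneg (add_nonneg (hA i hi) (hB i hi)) (sq_nonneg _)) fun i hi ↦ ?_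
  have hAB : |A i - B i| ≤ A i + B i := abs_sub_le_of_nonneg_of_le (hA i hi)
    (le_add_of_nonneg_right (hB i hi)) (hB i hi) (le_add_of_nonneg_left (hA i hi))
  calc ((A i - B i) * f i) ^ 2 = |A i - B i| * (|A i - B i| * f i ^ 2) := by
        rw [mul_pow, ← sq_abs (A i - B i)]; ring
    _ ≤ |A i - B i| * ((A i + B i) * f i ^ 2) := by gcongr

theorem card_mul_sq_le_of_sum_eq_zero {X : Type*} [Fintype X] [DecidableEq X] {u : X → ℝ}
    (hu : ∑ x, u x = 0) (x : X) :
    Fintype.card X * u x ^ 2 ≤ (Fintype.card X - 1) * ∑ y, u y ^ 2 := by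
  have : Nonempty X := ⟨x⟩
  have hcard : (#(univ.erase x) : ℝ) = Fintype.card X - 1 := by
    rw [card_erase_of_mem (mem_univ x), card_univ, Nat.cast_sub Fintype.card_pos, Nat.cast_one]
  have hrest : ∑ y ∈ univ.erase x, u y = -u x := by
    linarith [add_sum_erase univ u (mem_univ x)]
  have hsq := add_sum_erase univ (u · ^ 2) (mem_univ x)
  have hCS := sum_mul_sq_le_sq_mul_sq (univ.erase x) (fun _ ↦ (1 : ℝ)) u
  simp only [one_mul, one_pow, sum_const, nsmul_eq_mul, mul_one, hrest, hcard] at hCS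
  nlinarith

theorem card_mul_sum_mul_sq_le_of_sum_eq_zero {X : Type*} [Fintype X] {P u : X → ℝ}
    (hP : IsProb P) (hu : ∑ x, u x = 0) :
    Fintype.card X * ∑ x, P x * u x ^ 2 ≤ (Fintype.card X - 1) * ∑ x, u x ^ 2 := by
  classical
  calc Fintype.card X * ∑ x, P x * u x ^ 2 = ∑ x, P x * (Fintype.card X * u x ^ 2) := by
        rw [mul_sum]; exact sum_congr rfl fun x _ ↦ by ring
    _ ≤ ∑ x, P x * ((Fintype.card X - 1) * ∑ y, u y ^ 2) :=
        sum_le_sum fun x _ ↦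
          mul_le_mul_of_nonneg_left (card_mul_sq_le_of_sum_eq_zero hu x) (hP.1 x)
    _ = (Fintype.card X - 1) * ∑ x, u x ^ 2 := by rw [← sum_mul, hP.2, one_mul]

theorem IsProb.card_pos {X : Type*} [Fintype X] {P : X → ℝ} (hP : IsProb P) :
    0 < Fintype.card X := by
  have : Nonempty X := by
    by_contra h
    simpa [not_nonempty_iff.mp h] using hP.2
  exact Fintype.card_pos

theorem sum_mul_sq_sub_add_sum_mul_sq_sub_le {X : Type*} [Fintype X] {P Q : X → ℝ}
    (hP : IsProb P) (hQ : IsProb Q) :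
    ∑ x, P x * (P x - Q x) ^ 2 + ∑ x, Q x * (P x - Q x) ^ 2 ≤
      Fintype.card X * (∑ x, (P x - Q x) ^ 2) / 2 := by
  have hu : ∑ x, (P x - Q x) = 0 := by simp [sum_sub_distrib, hP.2, hQ.2]
  have hK : (0 : ℝ) < Fintype.card X := Nat.cast_pos.mpr hP.card_pos
  have hc : 0 ≤ ∑ x, (P x - Q x) ^ 2 := sum_nonneg fun x _ ↦ sq_nonneg _
  have := card_mul_sum_mul_sq_le_of_sum_eq_zero hP hu
  have := card_mul_sum_mul_sq_le_of_sum_eq_zero hQ hu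
  refine le_of_mul_le_mul_left ?_ hK
  nlinarith [mul_nonneg hc (sq_nonneg ((Fintype.card X : ℝ) - 2))]

theorem ml_error_le_card_div {X : Type*} [Fintype X] {P Q : X → ℝ} (hP : IsProb P) (hQ : IsProb Q)
    (n : ℕ) :
    (1 / 2) * (1 - (1 / 2) * ∑ xs : Fin n → X, |prodD P n xs - prodD Q n xs|) ≤
      Fintype.card X / (2 * Fintype.card X + 2 * (n * ∑ x, (P x - Q x) ^ 2)) := by
  set u := fun x ↦ P x - Q x
  set c := ∑ x, u x ^ 2
  set K : ℝ := (Fintype.card X : ℝ)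
  set S := ∑ xs : Fin n → X, |prodD P n xs - prodD Q n xs|
  set T := fun xs : Fin n → X ↦ ∑ i, u (xs i)
  have hc : 0 ≤ c := sum_nonneg fun x _ ↦ sq_nonneg _
  have hmean : ∑ x, P x * u x - ∑ x, Q x * u x = c := by
    simp only [c, ← sum_sub_distrib, sq, u, sub_mul]
  -- `θ` is the midpoint of the means of `T` under the two hypotheses, so its biases are `±n c / 2`.
  set θ := n * (∑ x, P x * u x + ∑ x, Q x * u x) / 2
  have hcorr : ∑ xs, (prodD P n xs - prodD Q n xs) * (T xs - θ) = n * c := by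
    simp only [sub_mul, sum_sub_distrib, T, sum_prodD_mul_sum_sub hP.2, sum_prodD_mul_sum_sub hQ.2,
      ← hmean]
    ring
  have hspread : ∑ xs, (prodD P n xs + prodD Q n xs) * (T xs - θ) ^ 2 ≤ n * c / 2 * (K + n * c) := by
    simp only [add_mul, sum_add_distrib, T, sum_prodD_mul_sum_sub_sq hP.2,
      sum_prodD_mul_sum_sub_sq hQ.2]
    have hP_gap : n * ∑ x, P x * u x - θ = n * c / 2 := by simp only [θ, ← hmean]; ring
    have hQ_gap : n * ∑ x, Q x * u x - θ = -(n * c / 2) := by simp only [θ, ← hmean]; ring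
    rw [hP_gap, hQ_gap]
    have := mul_le_mul_of_nonneg_left (sum_mul_sq_sub_add_sum_mul_sq_sub_le hP hQ) n.cast_nonneg
    nlinarith [mul_nonneg n.cast_nonneg (sq_nonneg (∑ x, P x * u x)),
      mul_nonneg n.cast_nonneg (sq_nonneg (∑ x, Q x * u x))]
  have hCS := sq_sum_sub_mul_le_sum_abs_sub_mul_sum_add_mul_sq univ
    (fun xs _ ↦ prodD_nonneg hP.1 xs) (fun xs _ ↦ prodD_nonneg hQ.1 xs)
    (fun xs ↦ T xs - θ)
  rw [hcorr] at hCS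
  have hS0 : 0 ≤ S := sum_nonneg fun xs _ ↦ abs_nonneg _
  have hS : 2 * (n * c) ≤ S * (K + n * c) := by
    have hsq : (n * c) ^ 2 ≤ n * c / 2 * (S * (K + n * c)) := by
      calc (n * c) ^ 2 ≤ S * (n * c / 2 * (K + n * c)) :=
            hCS.trans (mul_le_mul_of_nonneg_left hspread hS0)
        _ = n * c / 2 * (S * (K + n * c)) := by ring
    rcases (mul_nonneg n.cast_nonneg hc).eq_or_lt with hzero | hpos
    · rw [← hzero]; simp only [mul_zero, add_zero]; positivity
    · nlinarith
  have hK : 0 < K := Nat.cast_pos.mpr hP.card_pos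
  rw [le_div_iff₀ (by positivity)]
  nlinarith

theorem rpow_le_mul_of_rpow_neg_le_sqrt {x c ε : ℝ} (hx : 0 < x)
    (h : x ^ (-(1 / 2 - ε)) ≤ √c) : x ^ (2 * ε) ≤ x * c := by
  rw [Real.le_sqrt' (Real.rpow_pos_of_pos hx _)] at h
  calc x ^ (2 * ε) = x * (x ^ (-(1 / 2 - ε))) ^ 2 := by
        rw [sq, ← Real.rpow_add hx, show 2 * ε = 1 + (-(1 / 2 - ε) + -(1 / 2 - ε)) by ring,
          Real.rpow_add hx, Real.rpow_one]
    _ ≤ x * c := by gcongr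

theorem testing_between_converging_hypotheses_general {X : Type*} [Fintype X] {n : ℕ} (hn : 0 < n)
    (P Q : X → ℝ) (hP : IsProb P) (hQ : IsProb Q) (ε : ℝ)
    (hdist : (n : ℝ) ^ (-(1 / 2 - ε)) ≤ Real.sqrt (∑ x, (P x - Q x) ^ 2)) :
    (1 / 2) * (1 - (1 / 2) * ∑ xs : Fin n → X, |prodD P n xs - prodD Q n xs|) ≤
      (Fintype.card X : ℝ) / (2 * Fintype.card X + 2 * (n : ℝ) ^ (2 * ε)) := by
  have ht := rpow_le_mul_of_rpow_neg_le_sqrt (Nat.cast_pos.mpr hn) hdist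
  refine (ml_error_le_card_div hP hQ n).trans (div_le_div_of_nonneg_left (Nat.cast_nonneg _) ?_ ?_)
  · positivity
  · linarith

/-- Testing between converging hypotheses: for a uniform-prior binary hypothesis test
between i.i.d. samples from `P` and from `Q` on a finite alphabet `𝒳`, if
`‖P − Q‖₂ ≥ n^{−(1/2 − ε)}` with `ε ∈ (0, 1/2)`, then the maximum-likelihood probability
of error `P_ML = (1/2)(1 − ‖P^{⊗n} − Q^{⊗n}‖_TV)` is at most `|𝒳|/(2|𝒳| + 2 n^{2ε})`. -/
theorem testing_between_converging_hypotheses {X : Type*} [Fintype X] {n : ℕ} (hn : 0 < n)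
    (P Q : X → ℝ) (hP : IsProb P) (hQ : IsProb Q) (ε : ℝ) (hε0 : 0 < ε) (hε1 : ε < 1 / 2)
    (hdist : (n : ℝ) ^ (-(1 / 2 - ε)) ≤ Real.sqrt (∑ x, (P x - Q x) ^ 2)) :
    (1 / 2) * (1 - (1 / 2) * ∑ xs : Fin n → X, |prodD P n xs - prodD Q n xs|) ≤
      (Fintype.card X : ℝ) / (2 * Fintype.card X + 2 * (n : ℝ) ^ (2 * ε)) :=
  testing_between_converging_hypotheses_general hn P Q hP hQ ε hdist
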